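/- arXiv:1607.04949 — 3 statements merged into one kernel-verified Lean document; each statement's English description precedes it below -/
import Mathlib

section
/- Let L be a 7-dimensional complex Leibniz algebra with basis {l, p₊, p₋, X₁, X₂, X₃, X₄} such that the brackets among {l, p₊, p₋} are congruent modulo I = span{X₁,X₂,X₃,X₄} to the e(2) relations ([l,p₊]≡p₊, [l,p₋]≡-p₋, [p₊,p₋]≡0, etc.), [L,I]=0, and the right action of e(2) on I is given by [X₁,p₊]=X₂, [X₃,p₋]=X₄, [X₁,l]=½X₁, [X₂,l]=-½X₂, [X₃,l]=-½X₃, [X₄,l]=½X₄ (other actions zero). Then there exists a new basis {l', p₊', p₋', X₁, X₂, X₃, X₄} of L in which the only nonzero products are [l',p₊']=p₊', [p₊',l']=-p₊', [l',p₋']=-p₋', [p₋',l']=p₋', [X₁,p₊']=X₂, [X₃,p₋']=X₄, [X₁,l']=½X₁, [X₂,l']=-½X₂, [X₃,l']=-½X₃, [X₄,l']=½X₄. -/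
/-!
Let `T` be right multiplication by `l` on the abelian ideal `I`; from the action, `T² = 1/4`.
Replacing `l` by `l' = l - 4 [[l, l], l]` kills `[l, l]`. Put `p₊' = [l', p₊]` and
`p₋' = -[l', p₋]`; since `[L, I] = 0`, a bracket only sees its right argument modulo `I`, which
gives `[l', p₊'] = p₊'` and `[l', p₋'] = -p₋'`. Right multiplication by `l'` is a derivation, so
`[p₊', l'] = -p₊'`, `[p₋', l'] = p₋'`, and the brackets among `p₊', p₋'` are elements of `I`
of `T`-weight `-2`, `0` or `2`. As `T` has only the eigenvalues `±1/2`, they vanish.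
-/

section Leibniz

variable {R L : Type*} [CommRing R] [AddCommGroup L] [Module R L]
  (br : L →ₗ[R] L →ₗ[R] L) (I : Submodule R L)

structure IsE2Triple (l p q : L) : Prop where
  ll : br l l = 0
  lp : br l p = p
  lq : br l q = -q
  pl : br p l = -p
  ql : br q l = q
  pp : br p p = 0
  pq : br p q = 0
  qp : br q p = 0
  qq : br q q = 0

variable {br I}

theorem bracket_eq_of_sub_mem (hLI : ∀ x, ∀ i ∈ I, br x i = 0) (x : L) {y y' : L}
    (h : y - y' ∈ I) : br x y = br x y' := by
  rw [← sub_eq_zero, ← map_sub, hLI x _ h]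

theorem bracket_sub_bracket_mem {x x' y : L} (hR : ∀ i ∈ I, br i y ∈ I) (hx : x - x' ∈ I) :
    br x y - br x' y ∈ I := by
  rw [← LinearMap.sub_apply, ← map_sub]
  exact hR _ hx

theorem bracket_mem_of_sub_mem (hLI : ∀ x, ∀ i ∈ I, br x i = 0) {x x' y y' : L}
    (hR : ∀ i ∈ I, br i y' ∈ I) (hx : x - x' ∈ I) (hy : y - y' ∈ I) (h : br x' y' ∈ I) :
    br x y ∈ I := by
  rw [bracket_eq_of_sub_mem hLI x hy, ← sub_add_cancel (br x y') (br x' y')]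
  exact add_mem (bracket_sub_bracket_mem hR hx) h

theorem bracket_apply_eq_add_smul
    (leib : ∀ x y z : L, br (br x y) z = br (br x z) y + br x (br y z))
    {x y z : L} {α β : R} (hx : br x z = α • x) (hy : br y z = β • y) :
    br (br x y) z = (α + β) • br x y := by
  rw [leib, hx, hy]
  simp only [map_smul, LinearMap.smul_apply, add_smul]

end Leibniz

theorem eq_zero_of_apply_apply_eq_smul {K M : Type*} [Field K] [AddCommGroup M] [Module K M]
    {f : M →ₗ[K] M} {v : M} {c d : K} (hf : f (f v) = d • v) (hv : f v = c • v)
    (hc : c * c ≠ d) : v = 0 := by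
  rw [hv, map_smul, hv, smul_smul] at hf
  exact (smul_eq_zero.mp (sub_smul (c * c) d v ▸ sub_eq_zero.mpr hf)).resolve_left
    (sub_ne_zero.mpr hc)

section E2

variable {K L : Type*} [Field K] [CharZero K] [AddCommGroup L] [Module K L]
  {br : L →ₗ[K] L →ₗ[K] L} {I : Submodule K L} (hLI : ∀ x, ∀ i ∈ I, br x i = 0) {l p q : L}

include hLI

theorem exists_sub_mem_bracket_self_eq_zero (hRl : ∀ v ∈ I, br v l ∈ I)
    (hT : ∀ v ∈ I, br (br v l) l = (1 / 4 : K) • v) (hll : br l l ∈ I) :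
    ∃ l', l' - l ∈ I ∧ br l' l' = 0 := by
  have ha : -(4 : K) • br (br l l) l ∈ I := I.smul_mem _ (hRl _ hll)
  have hl' : l + -(4 : K) • br (br l l) l - l ∈ I := by rwa [add_sub_cancel_left]
  refine ⟨_, hl', ?_⟩
  rw [bracket_eq_of_sub_mem hLI _ hl', map_add, LinearMap.add_apply, map_smul,
    LinearMap.smul_apply, hT _ hll, smul_smul]
  norm_num

theorem exists_isE2Triple
    (leib : ∀ x y z : L, br (br x y) z = br (br x z) y + br x (br y z))
    (hRl : ∀ v ∈ I, br v l ∈ I) (hRp : ∀ v ∈ I, br v p ∈ I) (hRq : ∀ v ∈ I, br v q ∈ I)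
    (hT : ∀ v ∈ I, br (br v l) l = (1 / 4 : K) • v)
    (hlp : br l p - p ∈ I) (hpl : br p l + p ∈ I) (hlq : br l q + q ∈ I) (hql : br q l - q ∈ I)
    (hpq : br p q ∈ I) (hqp : br q p ∈ I) (hll : br l l ∈ I) (hpp : br p p ∈ I)
    (hqq : br q q ∈ I) :
    ∃ l' p' q', l' - l ∈ I ∧ p' - p ∈ I ∧ q' - q ∈ I ∧ IsE2Triple br l' p' q' := by
  obtain ⟨l', hl', hl'l'⟩ := exists_sub_mem_bracket_self_eq_zero hLI hRl hT hll
  have hRl' : ∀ x, br x l' = br x l := fun x ↦ bracket_eq_of_sub_mem hLI x hl'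
  have hp' : br l' p - p ∈ I := by
    simpa using add_mem (bracket_sub_bracket_mem hRp hl') hlp
  have hq' : -br l' q - q ∈ I := by
    convert neg_mem (add_mem (bracket_sub_bracket_mem hRq hl') hlq) using 1
    abel
  have hpl' : br (br l' p) l' = (-1 : K) • br l' p := by
    rw [leib, hl'l', hRl', bracket_eq_of_sub_mem hLI l' (y' := -p) (by rwa [sub_neg_eq_add])]
    simp
  have hql' : br (-br l' q) l' = (1 : K) • -br l' q := by
    rw [map_neg, LinearMap.neg_apply, leib, hl'l', hRl', bracket_eq_of_sub_mem hLI l' hql]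
    simp
  have vanish : ∀ {x y : L} {α β : K}, br x y ∈ I → br x l' = α • x → br y l' = β • y →
      (α + β) * (α + β) ≠ 1 / 4 → br x y = 0 := fun hxy hx hy hc ↦
    eq_zero_of_apply_apply_eq_smul (f := br.flip l') (by simpa [hRl'] using hT _ hxy)
      (bracket_apply_eq_add_smul leib hx hy) hc
  refine ⟨l', br l' p, -br l' q, hl', hp', hq', hl'l', bracket_eq_of_sub_mem hLI l' hp', ?_,
    by simpa using hpl', by simpa using hql',
    vanish (bracket_mem_of_sub_mem hLI hRp hp' hp' hpp) hpl' hpl' (by norm_num),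
    vanish (bracket_mem_of_sub_mem hLI hRq hp' hq' hpq) hpl' hql' (by norm_num),
    vanish (bracket_mem_of_sub_mem hLI hRp hq' hp' hqp) hql' hpl' (by norm_num),
    vanish (bracket_mem_of_sub_mem hLI hRq hq' hq' hqq) hql' hql' (by norm_num)⟩
  rw [bracket_eq_of_sub_mem hLI l' hq', neg_neg]

end E2

theorem span_range_eq_top_of_sub_mem {R L ι : Type*} [Ring R] [AddCommGroup L] [Module R L]
    (b : Module.Basis ι R L) {I : Submodule R L} {v : ι → L}
    (hI : I ≤ Submodule.span R (Set.range v)) (hv : ∀ i, v i - b i ∈ I) :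
    Submodule.span R (Set.range v) = ⊤ := by
  rw [eq_top_iff, ← b.span_eq, Submodule.span_le]
  rintro _ ⟨i, rfl⟩
  simpa using sub_mem (Submodule.subset_span (Set.mem_range_self i)) (hI (hv i))

/-- Classification theorem: a Leibniz algebra `L` with `L/I ≅ e(2)` and ideal
`I = span{X₁,X₂,X₃,X₄}` carrying the given 4-dimensional right `e(2)`-module structure
admits a basis `{l', p₊', p₋', X₁, X₂, X₃, X₄}` (with `l', p₊', p₋'` congruent to
`l, p₊, p₋` modulo `I`) whose only nonzero products are
`[l',p₊']=p₊', [p₊',l']=-p₊', [l',p₋']=-p₋', [p₋',l']=p₋', [X₁,p₊']=X₂, [X₃,p₋']=X₄,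
[X₁,l']=½X₁, [X₂,l']=-½X₂, [X₃,l']=-½X₃, [X₄,l']=½X₄`. -/
theorem stmt_10 {L : Type*} [AddCommGroup L] [Module ℂ L]
    (br : L →ₗ[ℂ] L →ₗ[ℂ] L)
    (leib : ∀ x y z : L, br (br x y) z = br (br x z) y + br x (br y z))
    -- basis ordering: 0 = l, 1 = p₊, 2 = p₋, 3 = X₁, 4 = X₂, 5 = X₃, 6 = X₄
    (b : Module.Basis (Fin 7) ℂ L)
    (I : Submodule ℂ L) (hI : I = Submodule.span ℂ {b 3, b 4, b 5, b 6})
    -- [L, I] = 0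
    (hLI : ∀ x : L, ∀ i ∈ I, br x i = 0)
    -- brackets among {l, p₊, p₋} are congruent mod I to the e(2) relations
    (c1 : br (b 0) (b 1) - b 1 ∈ I) (c2 : br (b 1) (b 0) + b 1 ∈ I)
    (c3 : br (b 0) (b 2) + b 2 ∈ I) (c4 : br (b 2) (b 0) - b 2 ∈ I)
    (c5 : br (b 1) (b 2) ∈ I) (c6 : br (b 2) (b 1) ∈ I)
    (c7 : br (b 0) (b 0) ∈ I) (c8 : br (b 1) (b 1) ∈ I) (c9 : br (b 2) (b 2) ∈ I)
    -- the right action of e(2) on I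
    (a1 : br (b 3) (b 0) = (1/2 : ℂ) • b 3) (a2 : br (b 3) (b 1) = b 4)
    (a3 : br (b 3) (b 2) = 0)
    (a4 : br (b 4) (b 0) = -((1/2 : ℂ) • b 4)) (a5 : br (b 4) (b 1) = 0)
    (a6 : br (b 4) (b 2) = 0)
    (a7 : br (b 5) (b 0) = -((1/2 : ℂ) • b 5)) (a8 : br (b 5) (b 1) = 0)
    (a9 : br (b 5) (b 2) = b 6)
    (a10 : br (b 6) (b 0) = (1/2 : ℂ) • b 6) (a11 : br (b 6) (b 1) = 0)
    (a12 : br (b 6) (b 2) = 0) :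
    ∃ l' pp' pm' : L, l' - b 0 ∈ I ∧ pp' - b 1 ∈ I ∧ pm' - b 2 ∈ I ∧
      Submodule.span ℂ (Set.range ![l', pp', pm', b 3, b 4, b 5, b 6]) = ⊤ ∧
      ∀ i j : Fin 7,
        br (![l', pp', pm', b 3, b 4, b 5, b 6] i) (![l', pp', pm', b 3, b 4, b 5, b 6] j) =
        ![![0, pp', -pm', 0, 0, 0, 0],
          ![-pp', 0, 0, 0, 0, 0, 0],
          ![pm', 0, 0, 0, 0, 0, 0],
          ![(1/2 : ℂ) • b 3, b 4, 0, 0, 0, 0, 0],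
          ![-((1/2 : ℂ) • b 4), 0, 0, 0, 0, 0, 0],
          ![-((1/2 : ℂ) • b 5), 0, b 6, 0, 0, 0, 0],
          ![(1/2 : ℂ) • b 6, 0, 0, 0, 0, 0, 0]] i j := by
  have hXI : ({b 3, b 4, b 5, b 6} : Set L) ⊆ I := hI ▸ Submodule.subset_span
  simp only [Set.insert_subset_iff, Set.singleton_subset_iff, SetLike.mem_coe] at hXI
  obtain ⟨hb3, hb4, hb5, hb6⟩ := hXI
  have hR : ∀ y, ({b 3, b 4, b 5, b 6} : Set L) ⊆ I.comap (br.flip y) → ∀ v ∈ I, br v y ∈ I :=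
    fun y hy v hv ↦ Submodule.span_le.mpr hy (hI ▸ hv)
  have hT : ∀ v ∈ I, br (br v (b 0)) (b 0) = (1 / 4 : ℂ) • v := by
    intro v hv
    rw [hI] at hv
    refine LinearMap.eqOn_span (f := br.flip (b 0) ∘ₗ br.flip (b 0)) (g := (1 / 4 : ℂ) • .id)
      ?_ hv
    simp [Set.EqOn, a1, a4, a7, a10, smul_smul]
    norm_num
  obtain ⟨l', p', q', hl, hp, hq, he⟩ := exists_isE2Triple hLI leib
    (hR _ (by simp [Set.insert_subset_iff, a1, a4, a7, a10, hb3, hb4, hb5, hb6]))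
    (hR _ (by simp [Set.insert_subset_iff, a2, a5, a8, a11, hb4]))
    (hR _ (by simp [Set.insert_subset_iff, a3, a6, a9, a12, hb6])) hT c1 c2 c3 c4 c5 c6 c7 c8 c9
  refine ⟨l', p', q', hl, hp, hq, ?_, ?_⟩
  · refine span_range_eq_top_of_sub_mem b (I := I) ?_ fun i ↦ by
      fin_cases i <;> simp [hl, hp, hq]
    rw [hI, Submodule.span_le]
    rintro _ (rfl | rfl | rfl | rfl)
    exacts [Submodule.subset_span ⟨3, rfl⟩, Submodule.subset_span ⟨4, rfl⟩,
      Submodule.subset_span ⟨5, rfl⟩, Submodule.subset_span ⟨6, rfl⟩]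
  · have hRl' := fun x ↦ bracket_eq_of_sub_mem hLI x hl
    have hRp' := fun x ↦ bracket_eq_of_sub_mem hLI x hp
    have hRq' := fun x ↦ bracket_eq_of_sub_mem hLI x hq
    intro i j
    fin_cases i <;> fin_cases j <;>
      simp [he.ll, he.lp, he.lq, he.pl, he.ql, he.pp, he.pq, he.qp, he.qq, hLI _ _ hb3,
        hLI _ _ hb4, hLI _ _ hb5, hLI _ _ hb6]
    all_goals simp [hRl', hRp', hRq', a1, a2, a3, a4, a5, a6, a7, a8, a9, a10, a11, a12]
end

section
/- For nonzero complex numbers α₁, α₂, the Leibniz algebra K₁(α₁,α₂) is isomorphic to K₁(1,1), where K₁(α₁,α₂) has basis {l, p₊, p₋, X₁, X₂, X₃} with nonzero products [l,p₊]=p₊, [p₊,l]=-p₊, [l,p₋]=-p₋, [p₋,l]=p₋, [l,l]=α₁X₁, [p₊,p₋]=α₂X₁, [p₋,p₊]=-α₂X₁, [X₁,p₊]=X₂, [X₁,p₋]=-X₃, [X₂,l]=-X₂, [X₃,l]=X₃. -/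
/-- Standard basis vector of `Fin 6 → ℂ`. -/
noncomputable def e₆ (i : Fin 6) : Fin 6 → ℂ := Pi.single i 1

/-- The bracket of the algebra `K₁(α₁,α₂)` on `Fin 6 → ℂ`, with basis ordering
`0 = l, 1 = p₊, 2 = p₋, 3 = X₁, 4 = X₂, 5 = X₃` and nonzero products
`[l,p₊]=p₊, [p₊,l]=-p₊, [l,p₋]=-p₋, [p₋,l]=p₋, [l,l]=α₁X₁, [p₊,p₋]=α₂X₁,
[p₋,p₊]=-α₂X₁, [X₁,p₊]=X₂, [X₁,p₋]=-X₃, [X₂,l]=-X₂, [X₃,l]=X₃`. -/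
noncomputable def K1 (a₁ a₂ : ℂ) (u v : Fin 6 → ℂ) : Fin 6 → ℂ :=
  ∑ i : Fin 6, ∑ j : Fin 6, (u i * v j) •
    ![![a₁ • e₆ 3, e₆ 1, -(e₆ 2), 0, 0, 0],
      ![-(e₆ 1), 0, a₂ • e₆ 3, 0, 0, 0],
      ![e₆ 2, -(a₂ • e₆ 3), 0, 0, 0, 0],
      ![0, e₆ 4, -(e₆ 5), 0, 0, 0],
      ![-(e₆ 4), 0, 0, 0, 0, 0],
      ![e₆ 5, 0, 0, 0, 0, 0]] i j

/-!
Rescaling the basis vectors by `l ↦ l`, `p₊ ↦ p p₊`, `p₋ ↦ q p₋`, `X₁ ↦ r X₁`, `X₂ ↦ rp X₂`,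
`X₃ ↦ rq X₃` transforms the structure constants `(α₁, pqα₂)` into `(rα₁, rα₂)`; taking
`r = α₁⁻¹`, `p = α₂/α₁`, `q = 1` normalises both to `1`.
-/

lemma K1_eq_coords (a b : ℂ) (u v : Fin 6 → ℂ) :
    K1 a b u v = ![0, u 0 * v 1 - u 1 * v 0, u 2 * v 0 - u 0 * v 2,
      a * (u 0 * v 0) + b * (u 1 * v 2) - b * (u 2 * v 1),
      u 3 * v 1 - u 4 * v 0, u 5 * v 0 - u 3 * v 2] := by
  funext k
  fin_cases k <;> simp [K1, Fin.sum_univ_six, e₆] <;> ring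

def scaleCoords {R ι : Type*} [CommSemiring R] (c : ι → Rˣ) : (ι → R) ≃ₗ[R] (ι → R) :=
  LinearEquiv.piCongrRight fun i => LinearEquiv.smulOfUnit (c i)

@[simp]
lemma scaleCoords_apply {R ι : Type*} [CommSemiring R] (c : ι → Rˣ) (w : ι → R) (i : ι) :
    scaleCoords c w i = c i * w i :=
  rfl

lemma scaleCoords_K1 (a b : ℂ) (p q r : ℂˣ) (u v : Fin 6 → ℂ) :
    scaleCoords ![1, p, q, r, r * p, r * q] (K1 a (p * q * b) u v) =
      K1 (r * a) (r * b) (scaleCoords ![1, p, q, r, r * p, r * q] u)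
        (scaleCoords ![1, p, q, r, r * p, r * q] v) := by
  funext k
  rw [K1_eq_coords, K1_eq_coords]
  fin_cases k <;> simp <;> ring

/-- For nonzero `α₁, α₂`, the Leibniz algebra `K₁(α₁,α₂)` is isomorphic to `K₁(1,1)`. -/
theorem stmt_12 (a₁ a₂ : ℂ) (h₁ : a₁ ≠ 0) (h₂ : a₂ ≠ 0) :
    ∃ f : (Fin 6 → ℂ) ≃ₗ[ℂ] (Fin 6 → ℂ),
      ∀ u v : Fin 6 → ℂ, f (K1 a₁ a₂ u v) = K1 1 1 (f u) (f v) := by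
  obtain ⟨p, hp⟩ : ∃ p : ℂˣ, (p : ℂ) = a₂ / a₁ := ⟨Units.mk0 _ (div_ne_zero h₂ h₁), rfl⟩
  obtain ⟨r, hr⟩ : ∃ r : ℂˣ, (r : ℂ) = a₁⁻¹ := ⟨Units.mk0 _ (inv_ne_zero h₁), rfl⟩
  have ha₂ : a₂ = p * (1 : ℂˣ) * a₁ := by simp [hp, h₁]
  have hr₁ : (r : ℂ) * a₁ = 1 := by simp [hr, h₁]
  refine ⟨scaleCoords ![1, p, 1, r, r * p, r * 1], fun u v => ?_⟩
  rw [ha₂, scaleCoords_K1, hr₁]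
end

section
/- The Leibniz algebras K₁(1,1), K₁(1,0), K₁(0,1), K₁(0,0) are pairwise non-isomorphic, where K₁(α₁,α₂) is the 6-dimensional complex Leibniz algebra with basis {l, p₊, p₋, X₁, X₂, X₃} and nonzero products [l,p₊]=p₊, [p₊,l]=-p₊, [l,p₋]=-p₋, [p₋,l]=p₋, [l,l]=α₁X₁, [p₊,p₋]=α₂X₁, [p₋,p₊]=-α₂X₁, [X₁,p₊]=X₂, [X₁,p₋]=-X₃, [X₂,l]=-X₂, [X₃,l]=X₃. -/
open Submodule Module

lemma finrank_span_basis_image {K V ι : Type*} [DivisionRing K] [AddCommGroup V] [Module K V]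
    (b : Basis ι K V) (s : Finset ι) : finrank K (span K (b '' s)) = s.card := by
  rw [Set.image_eq_range]
  exact (finrank_span_eq_card (b.linearIndependent.comp _ Subtype.val_injective)).trans (by simp)

lemma mem_span_basisFun_image {R η : Type*} [Semiring R] [Finite η] {s : Set η}
    {x : η → R} : x ∈ span R (Pi.basisFun R η '' s) ↔ ∀ i, x i ≠ 0 → i ∈ s := by
  rw [Basis.mem_span_image]
  simp [Set.subset_def]

section BracketInvariants

variable {R M N : Type*}

def squares (B : M → M → M) : Set M := Set.range fun u => B u u

lemma self_mem_squares (B : M → M → M) (u : M) : B u u ∈ squares B := ⟨u, rfl⟩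

variable [Semiring R] [AddCommMonoid M] [Module R M] [AddCommMonoid N] [Module R N]

def leftAnnihilatorDerived (B : M → M → M) : Set M := {x | ∀ u v, B x (B u v) = 0}

lemma LinearEquiv.finrank_span_image (f : M ≃ₗ[R] N) (s : Set M) :
    finrank R (span R (f '' s)) = finrank R (span R s) := by
  rw [span_image_linearEquiv, LinearEquiv.finrank_map_eq]

variable {B : M → M → M} {B' : N → N → N} {f : M ≃ₗ[R] N}

lemma image_squares (hf : ∀ u v, f (B u v) = B' (f u) (f v)) : f '' squares B = squares B' := by
  rw [LinearEquiv.image_eq_preimage_symm]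
  ext y
  constructor
  · rintro ⟨u, hu⟩
    refine ⟨f u, ?_⟩
    simp only at hu ⊢
    rw [← hf, hu, LinearEquiv.apply_symm_apply]
  · rintro ⟨w, rfl⟩
    exact ⟨f.symm w, f.injective (by simp [hf])⟩

lemma image_leftAnnihilatorDerived (hf : ∀ u v, f (B u v) = B' (f u) (f v)) :
    f '' leftAnnihilatorDerived B = leftAnnihilatorDerived B' := by
  have hf_symm : ∀ u v, f.symm (B' u v) = B (f.symm u) (f.symm v) :=
    fun u v => f.injective (by simp [hf])
  rw [LinearEquiv.image_eq_preimage_symm]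
  ext y
  constructor
  · intro h u v
    exact f.symm.injective (by rw [hf_symm, hf_symm, h, map_zero])
  · intro h u v
    exact f.injective (by rw [hf, hf, f.apply_symm_apply, h, map_zero])

lemma finrank_span_squares_eq (hf : ∀ u v, f (B u v) = B' (f u) (f v)) :
    finrank R (span R (squares B')) = finrank R (span R (squares B)) := by
  rw [← image_squares hf, f.finrank_span_image]

lemma finrank_span_leftAnnihilatorDerived_eq (hf : ∀ u v, f (B u v) = B' (f u) (f v)) :
    finrank R (span R (leftAnnihilatorDerived B')) =
      finrank R (span R (leftAnnihilatorDerived B)) := by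
  rw [← image_leftAnnihilatorDerived hf, f.finrank_span_image]

end BracketInvariants

section K1

variable (a₁ a₂ : ℂ)

lemma K1_apply (u v : Fin 6 → ℂ) :
    K1 a₁ a₂ u v = ![0, u 0 * v 1 - u 1 * v 0, u 2 * v 0 - u 0 * v 2,
      a₁ * (u 0 * v 0) + a₂ * (u 1 * v 2 - u 2 * v 1),
      u 3 * v 1 - u 4 * v 0, u 5 * v 0 - u 3 * v 2] := by
  funext k
  fin_cases k <;> simp [K1, Fin.sum_univ_six, e₆] <;> ring

-- `[p₊ + X₁, p₊ + X₁] = X₂` and `[X₁ - p₋, X₁ - p₋] = X₃`.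
lemma basisFun_four_mem_span_squares_K1 :
    Pi.basisFun ℂ (Fin 6) 4 ∈ span ℂ (squares (K1 a₁ a₂)) := by
  convert mem_span_of_mem (self_mem_squares (K1 _ _) ![0, 1, 0, 1, 0, 0]) using 1
  funext k
  fin_cases k <;> simp [K1_apply]

lemma basisFun_five_mem_span_squares_K1 :
    Pi.basisFun ℂ (Fin 6) 5 ∈ span ℂ (squares (K1 a₁ a₂)) := by
  convert mem_span_of_mem (self_mem_squares (K1 _ _) ![0, 0, -1, 1, 0, 0]) using 1
  funext k
  fin_cases k <;> simp [K1_apply]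

lemma span_squares_K1_of_ne_zero (ha : a₁ ≠ 0) :
    span ℂ (squares (K1 a₁ a₂)) =
      span ℂ (Pi.basisFun ℂ (Fin 6) '' ({3, 4, 5} : Finset (Fin 6))) := by
  refine le_antisymm (span_le.2 ?_) (span_le.2 ?_)
  · rintro _ ⟨u, rfl⟩
    rw [SetLike.mem_coe, mem_span_basisFun_image]
    intro i
    fin_cases i <;> simp [K1_apply, mul_comm]
  · simp only [Finset.coe_insert, Finset.coe_singleton, Set.image_insert_eq,
      Set.image_singleton, Set.insert_subset_iff, Set.singleton_subset_iff, SetLike.mem_coe]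
    refine ⟨?_, basisFun_four_mem_span_squares_K1 a₁ a₂,
      basisFun_five_mem_span_squares_K1 a₁ a₂⟩
    convert smul_mem _ a₁⁻¹ (mem_span_of_mem (self_mem_squares (K1 a₁ a₂) (Pi.single 0 1)))
      using 1
    funext k
    fin_cases k <;> simp [K1_apply, ha]

lemma span_squares_K1_zero :
    span ℂ (squares (K1 0 a₂)) =
      span ℂ (Pi.basisFun ℂ (Fin 6) '' ({4, 5} : Finset (Fin 6))) := by
  refine le_antisymm (span_le.2 ?_) (span_le.2 ?_)
  · rintro _ ⟨u, rfl⟩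
    rw [SetLike.mem_coe, mem_span_basisFun_image]
    intro i
    fin_cases i <;> simp [K1_apply, mul_comm]
  · simp only [Finset.coe_insert, Finset.coe_singleton, Set.image_insert_eq,
      Set.image_singleton, Set.insert_subset_iff, Set.singleton_subset_iff, SetLike.mem_coe]
    exact ⟨basisFun_four_mem_span_squares_K1 0 a₂, basisFun_five_mem_span_squares_K1 0 a₂⟩

lemma span_leftAnnihilatorDerived_K1_of_ne_zero (ha : a₂ ≠ 0) :
    span ℂ (leftAnnihilatorDerived (K1 a₁ a₂)) =
      span ℂ (Pi.basisFun ℂ (Fin 6) '' ({4, 5} : Finset (Fin 6))) := by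
  refine le_antisymm (span_le.2 fun x hx => ?_) (span_le.2 ?_)
  · -- bracket `x` with `[l,p₊] = p₊` and `[l,p₋] = -p₋`
    have h₁ := congrFun (hx (Pi.single 0 1) (Pi.single 1 1))
    have h₂ := congrFun (hx (Pi.single 0 1) (Pi.single 2 1))
    have hx₀ : x 0 = 0 := by simpa [K1_apply] using h₁ 1
    have hx₁ : x 1 = 0 := by simpa [K1_apply, ha] using h₂ 3
    have hx₂ : x 2 = 0 := by simpa [K1_apply, ha] using h₁ 3
    have hx₃ : x 3 = 0 := by simpa [K1_apply] using h₁ 4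
    rw [SetLike.mem_coe, mem_span_basisFun_image]
    intro i
    fin_cases i <;> simp [hx₀, hx₁, hx₂, hx₃]
  · rw [Set.image_subset_iff]
    intro i hi
    simp only [Finset.coe_insert, Finset.coe_singleton, Set.mem_insert_iff,
      Set.mem_singleton_iff] at hi
    rcases hi with rfl | rfl <;>
      exact subset_span fun u v => by funext k; fin_cases k <;> simp [K1_apply]

lemma span_leftAnnihilatorDerived_K1_zero :
    span ℂ (leftAnnihilatorDerived (K1 a₁ 0)) =
      span ℂ (Pi.basisFun ℂ (Fin 6) '' ({1, 2, 4, 5} : Finset (Fin 6))) := by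
  refine le_antisymm (span_le.2 fun x hx => ?_) (span_le.2 ?_)
  · have h₁ := congrFun (hx (Pi.single 0 1) (Pi.single 1 1))
    have hx₀ : x 0 = 0 := by simpa [K1_apply] using h₁ 1
    have hx₃ : x 3 = 0 := by simpa [K1_apply] using h₁ 4
    rw [SetLike.mem_coe, mem_span_basisFun_image]
    intro i
    fin_cases i <;> simp [hx₀, hx₃]
  · rw [Set.image_subset_iff]
    intro i hi
    simp only [Finset.coe_insert, Finset.coe_singleton, Set.mem_insert_iff,
      Set.mem_singleton_iff] at hi
    rcases hi with rfl | rfl | rfl | rfl <;>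
      exact subset_span fun u v => by funext k; fin_cases k <;> simp [K1_apply]

lemma finrank_span_squares_K1 :
    finrank ℂ (span ℂ (squares (K1 a₁ a₂))) = if a₁ = 0 then 2 else 3 := by
  split_ifs with ha
  · rw [ha, span_squares_K1_zero, finrank_span_basis_image]; rfl
  · rw [span_squares_K1_of_ne_zero a₁ a₂ ha, finrank_span_basis_image]; rfl

lemma finrank_span_leftAnnihilatorDerived_K1 :
    finrank ℂ (span ℂ (leftAnnihilatorDerived (K1 a₁ a₂))) = if a₂ = 0 then 4 else 2 := by
  split_ifs with ha
  · rw [ha, span_leftAnnihilatorDerived_K1_zero, finrank_span_basis_image]; rfl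
  · rw [span_leftAnnihilatorDerived_K1_of_ne_zero a₁ a₂ ha, finrank_span_basis_image]; rfl

end K1

/-- The Leibniz algebras `K₁(1,1), K₁(1,0), K₁(0,1), K₁(0,0)` are pairwise
non-isomorphic. -/
theorem stmt_13 :
    ∀ p ∈ ({(1,1), (1,0), (0,1), (0,0)} : Set (ℂ × ℂ)),
      ∀ q ∈ ({(1,1), (1,0), (0,1), (0,0)} : Set (ℂ × ℂ)), p ≠ q →
        ¬ ∃ f : (Fin 6 → ℂ) ≃ₗ[ℂ] (Fin 6 → ℂ),
            ∀ u v : Fin 6 → ℂ, f (K1 p.1 p.2 u v) = K1 q.1 q.2 (f u) (f v) := by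
  rintro p hp q hq hne ⟨f, hf⟩
  have hsq := finrank_span_squares_eq hf
  have hann := finrank_span_leftAnnihilatorDerived_eq hf
  simp only [finrank_span_squares_K1, finrank_span_leftAnnihilatorDerived_K1] at hsq hann
  simp only [Set.mem_insert_iff, Set.mem_singleton_iff] at hp hq
  rcases hp with rfl | rfl | rfl | rfl <;> rcases hq with rfl | rfl | rfl | rfl <;> simp_all
end
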